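/- arXiv:1708.05188 — 7 statements merged into one kernel-verified Lean document; each statement's English description precedes it below -/
import Mathlib

section
/- The diameter of the Hasse diagram of the lattice NC(n) of non-crossing partitions of {1,...,n} is n-1. -/
/-- A partition of `{1,...,n}` (modeled as a setoid on `Fin n`) is non-crossing. -/
def IsNoncrossing {n : ℕ} (s : Setoid (Fin n)) : Prop :=
  ∀ a b c d : Fin n, a < b → b < c → c < d → s.r a c → s.r b d → s.r a b

/-- `NC n`: the set of non-crossing partitions of `{1,...,n}`, ordered by reverse
refinement (the order induced from the refinement order on setoids). -/
abbrev NC (n : ℕ) := {s : Setoid (Fin n) // IsNoncrossing s}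

/-- The number of blocks of a partition. -/
noncomputable def blocks {n : ℕ} (s : Setoid (Fin n)) : ℕ := Nat.card (Quotient s)

/-- The Hasse diagram of `NC n`: vertices are non-crossing partitions, edges join
pairs where one covers the other. -/
def hasse (n : ℕ) : SimpleGraph (NC n) where
  Adj x y := x ⋖ y ∨ y ⋖ x
  symm := ⟨fun _ _ h => h.symm⟩
  loopless := ⟨fun x h => lt_irrefl x (h.elim CovBy.lt CovBy.lt)⟩

/-!
`NC(n)` is graded by the rank `n - #blocks`. If `x < y`, let `a` be the least element of a block
of `y` that is a union of several blocks of `x`, and `b` the least element of that block not in the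
`x`-block of `a`; merging the `x`-blocks of `a` and `b` gives a non-crossing partition between `x`
and `y` with one block fewer. Hence every cover merges exactly two blocks. In a bounded graded
poset, any two elements are joined through `⊥` and through `⊤` by walks of total length
`2 (grade ⊤ - grade ⊥)`, so one of them is short enough; and `⊥`, `⊤` are at distance exactly
`grade ⊤ - grade ⊥` because every edge changes the grade by one.
-/

theorem Nat.card_eq_card_add_one_of_surjective {α β : Type*} [Finite α] {f : α → β}
    (hf : Function.Surjective f) {a b : α} (hab : a ≠ b) (hfab : f a = f b)
    (hinj : Set.InjOn f {b}ᶜ) : Nat.card α = Nat.card β + 1 := by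
  have himage : f '' {b}ᶜ = Set.univ := by
    refine Set.eq_univ_of_forall fun y => ?_
    obtain ⟨c, rfl⟩ := hf y
    by_cases hc : c = b
    · exact ⟨a, by simpa [← hc] using hab, hc ▸ hfab⟩
    · exact ⟨c, hc, rfl⟩
  rw [← Set.ncard_univ β, ← himage, hinj.ncard_image, ← Set.ncard_univ α,
    ← Set.ncard_sdiff_singleton_add_one (Set.mem_univ b), Set.compl_eq_univ_sdiff]

namespace Setoid

variable {α : Type*}

theorem map_of_le_surjective {s t : Setoid α} (h : s ≤ t) : Function.Surjective (map_of_le h) :=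
  Quotient.ind fun p => ⟨Quotient.mk s p, rfl⟩

theorem card_quotient_lt_of_lt [Finite α] {s t : Setoid α} (h : s < t) :
    Nat.card (Quotient t) < Nat.card (Quotient s) := by
  refine (Nat.card_le_card_of_surjective _ (map_of_le_surjective h.le)).lt_of_ne fun hcard => ?_
  have hinj := ((Nat.bijective_iff_surjective_and_card _).2
    ⟨map_of_le_surjective h.le, hcard.symm⟩).injective
  exact h.not_ge fun p q hpq =>
    Quotient.exact (hinj (a₁ := Quotient.mk s p) (a₂ := Quotient.mk s q) (Quotient.sound hpq))

def mergeClasses (s : Setoid α) (a b : α) : Setoid α where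
  r p q := s p q ∨ ((s p a ∨ s p b) ∧ (s q a ∨ s q b))
  iseqv := by
    have hsat {p q} (h : s p q) : s q a ∨ s q b → s p a ∨ s p b := Or.imp (s.trans' h) (s.trans' h)
    refine ⟨fun p => Or.inl (s.refl' p), ?_, ?_⟩
    · rintro p q (h | ⟨hp, hq⟩)
      exacts [Or.inl (s.symm' h), Or.inr ⟨hq, hp⟩]
    · rintro p q r (h₁ | ⟨hp, hq⟩) (h₂ | ⟨hq', hr⟩)
      exacts [Or.inl (s.trans' h₁ h₂), Or.inr ⟨hsat h₁ hq', hr⟩,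
        Or.inr ⟨hp, hsat (s.symm' h₂) hq⟩, Or.inr ⟨hp, hr⟩]

variable {s : Setoid α} {a b : α}

theorem le_mergeClasses : s ≤ s.mergeClasses a b := fun _ _ => Or.inl

theorem mergeClasses_le {t : Setoid α} (h : s ≤ t) (hab : t a b) : s.mergeClasses a b ≤ t := by
  have hta {p} (hp : s p a ∨ s p b) : t p a :=
    hp.elim (h ·) fun hpb => t.trans' (h hpb) (t.symm' hab)
  rintro p q (hpq | ⟨hp, hq⟩)
  exacts [h hpq, t.trans' (hta hp) (t.symm' (hta hq))]

theorem mergeClasses_rel : s.mergeClasses a b a b :=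
  Or.inr ⟨Or.inl (s.refl' a), Or.inr (s.refl' b)⟩

theorem card_quotient_mergeClasses [Finite α] (hab : ¬ s a b) :
    Nat.card (Quotient s) = Nat.card (Quotient (s.mergeClasses a b)) + 1 := by
  refine Nat.card_eq_card_add_one_of_surjective (map_of_le_surjective le_mergeClasses)
    (a := Quotient.mk s a) (b := Quotient.mk s b) (fun h => hab (Quotient.exact h))
    (Quotient.sound mergeClasses_rel) ?_
  rintro ⟨p⟩ hp ⟨q⟩ hq hpq
  replace hp : ¬ s p b := fun h => hp (Quotient.sound h)
  replace hq : ¬ s q b := fun h => hq (Quotient.sound h)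
  refine Quotient.sound ((Quotient.exact hpq : (s.mergeClasses a b) p q).elim id ?_)
  rintro ⟨hpa | hpb, hqa | hqb⟩
  exacts [s.trans' hpa (s.symm' hqa), (hq hqb).elim, (hp hpb).elim, (hp hpb).elim]

theorem exists_rel_not_rel_minimal [LinearOrder α] [WellFoundedLT α] {x y : Setoid α}
    (hxy : x < y) : ∃ a b, y a b ∧ ¬ x a b ∧ (∀ t, y t a → a ≤ t) ∧
      (∀ t, y t a → ¬ x t a → b ≤ t) := by
  obtain ⟨a₀, b₀, hy₀, hx₀⟩ : ∃ a b, y a b ∧ ¬ x a b := by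
    by_contra! h
    exact hxy.not_ge h
  obtain ⟨a, ha, ha_min⟩ := wellFounded_lt.has_min {t | y t a₀} ⟨a₀, y.refl' a₀⟩
  have hD : {t | y t a ∧ ¬ x t a}.Nonempty := by
    by_cases h : x a₀ a
    · exact ⟨b₀, y.trans' (y.symm' hy₀) (y.symm' ha), fun h' => hx₀ (x.trans' h (x.symm' h'))⟩
    · exact ⟨a₀, y.symm' ha, h⟩
  obtain ⟨b, ⟨hba, hxba⟩, hb_min⟩ := wellFounded_lt.has_min _ hD
  exact ⟨a, b, y.symm' hba, fun h => hxba (x.symm' h),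
    fun t ht => not_lt.1 (ha_min t (y.trans' ht ha)), fun t ht hxt => not_lt.1 (hb_min t ⟨ht, hxt⟩)⟩

end Setoid

namespace SimpleGraph

variable {α : Type*} [PartialOrder α] [GradeOrder ℕ α] {a b : α}

theorem Walk.grade_le_grade_add_length (w : (hasse α).Walk a b) :
    grade ℕ a ≤ grade ℕ b + w.length := by
  induction w with
  | nil => simp
  | cons hadj w ih =>
    rw [Walk.length_cons]
    rcases hadj with h | h <;> have := Nat.covBy_iff_add_one_eq.1 (CovBy.grade ℕ h) <;> omega

theorem exists_walk_hasse_length_eq (h : a ≤ b) :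
    ∃ w : (hasse α).Walk a b, w.length = grade ℕ b - grade ℕ a := by
  induction hk : grade ℕ b - grade ℕ a generalizing a with
  | zero =>
    obtain rfl : a = b := h.eq_of_not_lt fun hlt => by have := grade_strictMono (𝕆 := ℕ) hlt; omega
    exact ⟨Walk.nil, rfl⟩
  | succ k ih =>
    obtain ⟨c, hac, hcb⟩ := exists_covBy_le_of_lt (h.lt_of_ne (by rintro rfl; omega))
    have := Nat.covBy_iff_add_one_eq.1 (CovBy.grade ℕ hac)
    obtain ⟨w, hw⟩ := ih hcb (by omega)
    exact ⟨Walk.cons (hasse_adj.2 (Or.inl hac)) w, by rw [Walk.length_cons, hw]⟩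

variable [BoundedOrder α]

theorem hasse_connected : (hasse α).Connected := by
  have hreach (a : α) : (hasse α).Reachable ⊥ a :=
    (exists_walk_hasse_length_eq bot_le).elim fun w _ => ⟨w⟩
  exact ⟨fun a b => (hreach a).symm.trans (hreach b)⟩

theorem hasse_dist_bot_top : (hasse α).dist ⊥ ⊤ = grade ℕ (⊤ : α) - grade ℕ (⊥ : α) := by
  obtain ⟨w, hw⟩ := exists_walk_hasse_length_eq (bot_le : (⊥ : α) ≤ ⊤)
  obtain ⟨w', hw'⟩ := hasse_connected.exists_walk_length_eq_dist (⊤ : α) ⊥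
  have := w'.grade_le_grade_add_length
  rw [hw', dist_comm] at this
  exact le_antisymm (hw ▸ dist_le w) (by omega)

theorem hasse_dist_le (a b : α) : (hasse α).dist a b ≤ grade ℕ (⊤ : α) - grade ℕ (⊥ : α) := by
  obtain ⟨w₁, h₁⟩ := exists_walk_hasse_length_eq (bot_le : ⊥ ≤ a)
  obtain ⟨w₂, h₂⟩ := exists_walk_hasse_length_eq (bot_le : ⊥ ≤ b)
  obtain ⟨w₃, h₃⟩ := exists_walk_hasse_length_eq (le_top : a ≤ ⊤)
  obtain ⟨w₄, h₄⟩ := exists_walk_hasse_length_eq (le_top : b ≤ ⊤)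
  have hbot := dist_le (w₁.reverse.append w₂)
  have htop := dist_le (w₃.append w₄.reverse)
  rw [Walk.length_append, Walk.length_reverse, h₁, h₂] at hbot
  rw [Walk.length_append, Walk.length_reverse, h₃, h₄] at htop
  have := grade_mono (𝕆 := ℕ) (bot_le : ⊥ ≤ a)
  have := grade_mono (𝕆 := ℕ) (bot_le : ⊥ ≤ b)
  have := grade_mono (𝕆 := ℕ) (le_top : a ≤ ⊤)
  have := grade_mono (𝕆 := ℕ) (le_top : b ≤ ⊤)
  omega

end SimpleGraph

theorem IsNoncrossing.mergeClasses {n : ℕ} {x y : Setoid (Fin n)} (hx : IsNoncrossing x)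
    (hy : IsNoncrossing y) (hxy : x ≤ y) {a b : Fin n} (hab : y a b)
    (ha : ∀ t, y t a → a ≤ t) (hb : ∀ t, y t a → ¬ x t a → b ≤ t) :
    IsNoncrossing (x.mergeClasses a b) := by
  set M : Fin n → Prop := fun t => x t a ∨ x t b
  have hM_of_rel {p q} (h : x p q) : M q → M p := Or.imp (x.trans' h) (x.trans' h)
  have hy_of_M {t} (ht : M t) : y t a := ht.elim (hxy ·) fun h => y.trans' (hxy h) (y.symm' hab)
  have hlt_of_not_M {t} (ht : y t a) (hMt : ¬ M t) : a < t ∧ b < t :=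
    ⟨(ha t ht).lt_of_ne fun h => hMt (Or.inl (h ▸ x.refl' a)),
      (hb t ht fun h => hMt (Or.inl h)).lt_of_ne fun h => hMt (Or.inr (h ▸ x.refl' b))⟩
  -- An `x`-block crossing `M` lies in the `y`-block of `a`, hence to the right of `a` and `b`,
  -- so it already crosses the `x`-block of `a` or that of `b`.
  have hM_inner {p q r s} (hpq : p < q) (hqr : q < r) (hrs : r < s) (hMp : M p) (hMr : M r)
      (hqs : x q s) : M q := by
    by_contra hMq
    have hqa : y q a := y.trans' (y.symm' (hy p q r s hpq hqr hrs
      (y.trans' (hy_of_M hMp) (y.symm' (hy_of_M hMr))) (hxy hqs))) (hy_of_M hMp)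
    obtain ⟨haq, hbq⟩ := hlt_of_not_M hqa hMq
    exact hMq (hMr.imp (fun h => x.symm' (hx _ _ _ _ haq hqr hrs (x.symm' h) hqs))
      fun h => x.symm' (hx _ _ _ _ hbq hqr hrs (x.symm' h) hqs))
  have hM_outer {p q r s} (hpq : p < q) (hqr : q < r) (hrs : r < s) (hpr : x p r) (hMq : M q)
      (hMs : M s) : M p := by
    by_contra hMp
    have hpa : y p a := y.trans' (hy p q r s hpq hqr hrs (hxy hpr)
      (y.trans' (hy_of_M hMq) (y.symm' (hy_of_M hMs)))) (hy_of_M hMq)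
    obtain ⟨hap, hbp⟩ := hlt_of_not_M hpa hMp
    exact hMp (hMq.imp (fun h => x.symm' (hx _ _ _ _ hap hpq hqr (x.symm' h) hpr))
      fun h => x.symm' (hx _ _ _ _ hbp hpq hqr (x.symm' h) hpr))
  rintro p q r s hpq hqr hrs (hpr | ⟨hMp, hMr⟩) (hqs | ⟨hMq, hMs⟩)
  · exact Or.inl (hx p q r s hpq hqr hrs hpr hqs)
  · exact Or.inr ⟨hM_outer hpq hqr hrs hpr hMq hMs, hMq⟩
  · exact Or.inr ⟨hMp, hM_inner hpq hqr hrs hMp hMr hqs⟩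
  · exact Or.inr ⟨hMp, hMq⟩

namespace NC

variable {n : ℕ}

theorem exists_lt_le_blocks_eq_add_one {x y : NC n} (h : x < y) :
    ∃ z : NC n, x < z ∧ z ≤ y ∧ blocks x.1 = blocks z.1 + 1 := by
  obtain ⟨a, b, hab, hxab, ha, hb⟩ := Setoid.exists_rel_not_rel_minimal (Subtype.coe_lt_coe.2 h)
  refine ⟨⟨_, x.2.mergeClasses y.2 h.le hab ha hb⟩, ?_, Setoid.mergeClasses_le h.le hab,
    Setoid.card_quotient_mergeClasses hxab⟩
  refine Subtype.coe_lt_coe.1 (Setoid.le_mergeClasses.lt_of_ne fun he => hxab ?_)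
  rw [he]
  exact Setoid.mergeClasses_rel

theorem blocks_eq_add_one_of_covBy {x y : NC n} (h : x ⋖ y) : blocks x.1 = blocks y.1 + 1 := by
  obtain ⟨z, hxz, hzy, hz⟩ := exists_lt_le_blocks_eq_add_one h.lt
  obtain rfl : z = y := hzy.eq_of_not_lt (h.2 hxz)
  exact hz

theorem blocks_le (s : Setoid (Fin n)) : blocks s ≤ n :=
  (Nat.card_le_card_of_surjective _ Quotient.mk_surjective).trans_eq (Nat.card_fin n)

instance : BoundedOrder (NC n) :=
  Subtype.boundedOrder (fun _ _ _ _ hab hbc _ hac _ => absurd hac (hab.trans hbc).ne)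
    fun _ _ _ _ _ _ _ _ _ => trivial

noncomputable instance : GradeOrder ℕ (NC n) where
  grade x := n - blocks x.1
  grade_strictMono x y h := by
    have : blocks y.1 < blocks x.1 := Setoid.card_quotient_lt_of_lt (Subtype.coe_lt_coe.2 h)
    have := blocks_le x.1
    show n - blocks x.1 < n - blocks y.1
    omega
  covBy_grade x y h := by
    have := blocks_eq_add_one_of_covBy h
    have := blocks_le x.1
    show n - blocks x.1 ⋖ n - blocks y.1
    rw [Nat.covBy_iff_add_one_eq]
    omega

theorem grade_bot : grade ℕ (⊥ : NC n) = 0 := by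
  show n - Nat.card (Quotient (⊥ : Setoid (Fin n))) = 0
  rw [Nat.card_congr Setoid.quotientBotEquiv, Nat.card_fin, Nat.sub_self]

theorem grade_top : grade ℕ (⊤ : NC n) = n - 1 := by
  cases n with
  | zero => exact Nat.zero_sub _
  | succ n =>
    show n + 1 - Nat.card (Quotient (⊤ : Setoid (Fin (n + 1)))) = n + 1 - 1
    rw [Nat.card_eq_one_iff_unique.2
      ⟨⟨by rintro ⟨p⟩ ⟨q⟩; exact Quotient.sound trivial⟩, ⟨Quotient.mk _ 0⟩⟩]

end NC

theorem hasse_diameter_general (n : ℕ) :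
    (hasse n).Connected ∧
    (∀ π ρ : NC n, (hasse n).dist π ρ ≤ n - 1) ∧
    (∃ π ρ : NC n, (hasse n).dist π ρ = n - 1) := by
  rw [show hasse n = SimpleGraph.hasse (NC n) from rfl]
  refine ⟨SimpleGraph.hasse_connected, fun π ρ => ?_, ⊥, ⊤, ?_⟩
  · simpa [NC.grade_bot, NC.grade_top] using SimpleGraph.hasse_dist_le π ρ
  · rw [SimpleGraph.hasse_dist_bot_top, NC.grade_bot, NC.grade_top, Nat.sub_zero]

/-- The diameter of the Hasse diagram of `NC n` is `n - 1`: the graph is connected,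
all distances are at most `n - 1`, and the distance `n - 1` is achieved. -/
theorem hasse_diameter (n : ℕ) (hn : 1 ≤ n) :
    (hasse n).Connected ∧
    (∀ π ρ : NC n, (hasse n).dist π ρ ≤ n - 1) ∧
    (∃ π ρ : NC n, (hasse n).dist π ρ = n - 1) :=
  hasse_diameter_general n
end

section
/- If π is an interval partition of {1,...,n} (or more generally a cyclic shift of one) and ρ ∈ NC(n) is any non-crossing partition, then the join of π and ρ in the full partition lattice is itself non-crossing, and hence equals the join of π and ρ in the lattice NC(n). -/
/-- An interval partition: every block is an interval of consecutive elements. -/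
def IsIntervalPartition {n : ℕ} (s : Setoid (Fin n)) : Prop :=
  ∀ a b c : Fin n, a ≤ b → b ≤ c → s.r a c → s.r a b

/-- A cyclic shift of an interval partition: for some shift `k`, pulling the
partition back along `i ↦ i + k` yields an interval partition. -/
def IsCyclicIntervalPartition {n : ℕ} (s : Setoid (Fin n)) : Prop :=
  ∃ k : Fin n, IsIntervalPartition (Setoid.comap (fun i => i + k) s)

/-!
An interval partition is the join of the collapses of its blocks, which are order-connected.
Merging into a non-crossing `ρ` all blocks that meet an order-connected set `S` keeps it
non-crossing: a block of `ρ` that surrounds one point of the merged block surrounds all of it,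
since `S` cannot jump over the endpoints of that block. Non-crossing depends only on the cyclic
order, so rotating by `k` reduces cyclic shifts to interval partitions. As `NC(n)` carries the
order induced from all partitions, a join that happens to be non-crossing is the join in `NC(n)`.
-/

namespace Setoid

variable {α β : Type*}

def collapse (S : Set α) : Setoid α where
  r a b := a = b ∨ (a ∈ S ∧ b ∈ S)
  iseqv := by
    refine ⟨fun _ => Or.inl rfl, ?_, ?_⟩
    · rintro a b (rfl | ⟨ha, hb⟩)
      exacts [Or.inl rfl, Or.inr ⟨hb, ha⟩]
    · rintro a b c (rfl | ⟨ha, hb⟩) (rfl | ⟨hb', hc⟩)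
      exacts [Or.inl rfl, Or.inr ⟨hb', hc⟩, Or.inr ⟨ha, hb⟩, Or.inr ⟨ha, hc⟩]

def saturation (ρ : Setoid α) (S : Set α) : Set α := {a | ∃ x ∈ S, ρ a x}

theorem mem_saturation_of_rel {ρ : Setoid α} {S : Set α} {a b : α} (hab : ρ a b)
    (hb : b ∈ ρ.saturation S) : a ∈ ρ.saturation S :=
  let ⟨x, hx, hbx⟩ := hb
  ⟨x, hx, ρ.trans' hab hbx⟩

theorem subset_saturation (ρ : Setoid α) (S : Set α) : S ⊆ ρ.saturation S :=
  fun a ha => ⟨a, ha, ρ.refl' a⟩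

def mergeMeeting (ρ : Setoid α) (S : Set α) : Setoid α where
  r a b := ρ a b ∨ (a ∈ ρ.saturation S ∧ b ∈ ρ.saturation S)
  iseqv := by
    refine ⟨fun a => Or.inl (ρ.refl' a), ?_, ?_⟩
    · rintro a b (h | ⟨ha, hb⟩)
      exacts [Or.inl (ρ.symm' h), Or.inr ⟨hb, ha⟩]
    · rintro a b c (h | ⟨ha, hb⟩) (h' | ⟨hb', hc⟩)
      · exact Or.inl (ρ.trans' h h')
      · exact Or.inr ⟨mem_saturation_of_rel h hb', hc⟩
      · exact Or.inr ⟨ha, mem_saturation_of_rel (ρ.symm' h') hb⟩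
      · exact Or.inr ⟨ha, hc⟩

theorem collapse_sup (S : Set α) (ρ : Setoid α) : collapse S ⊔ ρ = ρ.mergeMeeting S := by
  refine le_antisymm (sup_le ?_ ?_) ?_ <;> rw [le_def]
  · rintro a b (rfl | ⟨ha, hb⟩)
    exacts [Or.inl (ρ.refl' a), Or.inr ⟨subset_saturation ρ S ha, subset_saturation ρ S hb⟩]
  · exact fun h => Or.inl h
  · rintro a b (h | ⟨⟨x, hx, hax⟩, ⟨y, hy, hby⟩⟩)
    · exact le_def.mp le_sup_right h
    · have hxy : (collapse S ⊔ ρ) x y := le_def.mp le_sup_left (Or.inr ⟨hx, hy⟩)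
      exact (collapse S ⊔ ρ).trans' (le_def.mp le_sup_right hax)
        ((collapse S ⊔ ρ).trans' hxy (le_def.mp le_sup_right (ρ.symm' hby)))

theorem sup_collapse_classes [Fintype α] (s : Setoid α) :
    Finset.univ.sup (fun j => collapse {x | s x j}) = s := by
  refine le_antisymm (Finset.sup_le fun j _ => le_def.mpr ?_) (le_def.mpr fun {a b} hab => ?_)
  · rintro a b (rfl | ⟨ha, hb⟩)
    exacts [s.refl' a, s.trans' ha (s.symm' hb)]
  · exact le_def.mp (Finset.le_sup (Finset.mem_univ a)) (Or.inr ⟨s.refl' a, s.symm' hab⟩)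

def comapOrderIso (e : α ≃ β) : Setoid β ≃o Setoid α where
  toFun := comap e
  invFun := comap e.symm
  left_inv s := by ext; simp [comap_rel]
  right_inv s := by ext; simp [comap_rel]
  map_rel_iff' {s t} := by
    refine ⟨fun h x y hxy => ?_, fun h _ _ hxy => h hxy⟩
    have h' : t (e (e.symm x)) (e (e.symm y)) :=
      h (show s (e (e.symm x)) (e (e.symm y)) by simpa using hxy)
    simpa using h'

theorem comap_sup_of_bijective {f : α → β} (hf : f.Bijective) (s t : Setoid β) :
    comap f (s ⊔ t) = comap f s ⊔ comap f t :=
  (comapOrderIso (.ofBijective f hf)).map_sup s t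

end Setoid

section Noncrossing

variable {n : ℕ} {s ρ : Setoid (Fin n)}

theorem IsNoncrossing.mem_Ioo_of_rel (hs : IsNoncrossing s) {u v p z : Fin n} (huv : s u v)
    (hup : u < p) (hpv : p < v) (hnot : ¬ s u p) (hpz : s p z) : z ∈ Set.Ioo u v := by
  have hzu : z ≠ u := by rintro rfl; exact hnot (s.symm' hpz)
  refine ⟨lt_of_le_of_ne' (le_of_not_gt fun hzu' => hnot ?_) hzu, lt_of_not_ge fun hvz => ?_⟩
  · exact s.trans' (s.symm' (hs z u p v hzu' hup hpv (s.symm' hpz) huv)) (s.symm' hpz)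
  · rcases hvz.lt_or_eq with hvz | rfl
    · exact hnot (hs u p v z hup hpv hvz huv hpz)
    · exact hnot (s.trans' huv (s.symm' hpz))

theorem IsNoncrossing.saturation_subset_Ioo (hρ : IsNoncrossing ρ) {S : Set (Fin n)}
    (hS : S.OrdConnected) {u v p : Fin n} (huv : ρ u v) (hu : u ∉ ρ.saturation S)
    (hup : u < p) (hpv : p < v) (hp : p ∈ ρ.saturation S) :
    ρ.saturation S ⊆ Set.Ioo u v := by
  have hv : v ∉ ρ.saturation S := fun hv => hu (Setoid.mem_saturation_of_rel huv hv)
  have hnot {q : Fin n} (hq : q ∈ ρ.saturation S) : ¬ ρ u q :=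
    fun huq => hu (Setoid.mem_saturation_of_rel huq hq)
  obtain ⟨x, hx, hpx⟩ := hp
  obtain ⟨hux, hxv⟩ := hρ.mem_Ioo_of_rel huv hup hpv (hnot ⟨x, hx, hpx⟩) hpx
  rintro q ⟨y, hy, hqy⟩
  have hnS {w : Fin n} (hw : w ∉ ρ.saturation S) : w ∉ S :=
    fun h => hw (ρ.subset_saturation S h)
  have huy : u < y := lt_of_not_ge fun hyu => hnS hu <| by
    rcases hyu.lt_or_eq with hyu | rfl
    exacts [hS.out hy hx ⟨hyu.le, hux.le⟩, hy]
  have hyv : y < v := lt_of_not_ge fun hvy => hnS hv <| by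
    rcases hvy.lt_or_eq with hvy | rfl
    exacts [hS.out hx hy ⟨hxv.le, hvy.le⟩, hy]
  exact hρ.mem_Ioo_of_rel huv huy hyv (hnot (ρ.subset_saturation S hy)) (ρ.symm' hqy)

theorem IsNoncrossing.mergeMeeting (hρ : IsNoncrossing ρ) {S : Set (Fin n)}
    (hS : S.OrdConnected) : IsNoncrossing (ρ.mergeMeeting S) := by
  intro a b c d hab hbc hcd hac hbd
  rcases hac with hac | ⟨ha, hc⟩ <;> rcases hbd with hbd | ⟨hb, hd⟩
  · exact Or.inl (hρ a b c d hab hbc hcd hac hbd)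
  · by_cases ha : a ∈ ρ.saturation S
    · exact Or.inr ⟨ha, hb⟩
    · exact absurd (hρ.saturation_subset_Ioo hS hac ha hab hbc hb hd).2 hcd.not_gt
  · by_cases hb : b ∈ ρ.saturation S
    · exact Or.inr ⟨ha, hb⟩
    · exact absurd (hρ.saturation_subset_Ioo hS hbd hb hbc hcd hc ha).1 hab.not_gt
  · exact Or.inr ⟨ha, hb⟩

theorem IsIntervalPartition.ordConnected_class (hs : IsIntervalPartition s) (j : Fin n) :
    {x | s x j}.OrdConnected :=
  ⟨fun _ ha _ hc _ ⟨hab, hbc⟩ =>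
    s.trans' (s.symm' (hs _ _ _ hab hbc (s.trans' ha (s.symm' hc)))) ha⟩

theorem IsIntervalPartition.sup_isNoncrossing {π : Setoid (Fin n)} (hπ : IsIntervalPartition π)
    (hρ : IsNoncrossing ρ) : IsNoncrossing (π ⊔ ρ) := by
  classical
  rw [← Setoid.sup_collapse_classes π]
  induction (Finset.univ : Finset (Fin n)) using Finset.induction_on with
  | empty => simpa using hρ
  | insert j F _ ih =>
    rw [Finset.sup_insert, sup_assoc, Setoid.collapse_sup]
    exact ih.mergeMeeting (hπ.ordConnected_class j)

/-- Non-crossing only depends on the cyclic order of `a, b, c, d`, and adding `k` preserves it. -/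
theorem IsNoncrossing.comap_add (hs : IsNoncrossing s) (k : Fin n) :
    IsNoncrossing (s.comap (· + k)) := by
  intro a b c d hab hbc hcd (hac : s (a + k) (c + k)) (hbd : s (b + k) (d + k))
  change s (a + k) (b + k)
  have hcyc : (a + k < b + k ∧ b + k < c + k ∧ c + k < d + k) ∨
      (b + k < c + k ∧ c + k < d + k ∧ d + k < a + k) ∨
      (c + k < d + k ∧ d + k < a + k ∧ a + k < b + k) ∨
      (d + k < a + k ∧ a + k < b + k ∧ b + k < c + k) := by
    revert hab hbc hcd
    simp only [Fin.lt_def, Fin.val_add_eq_ite]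
    split_ifs <;> omega
  obtain ⟨h₁, h₂, h₃⟩ | ⟨h₁, h₂, h₃⟩ | ⟨h₁, h₂, h₃⟩ | ⟨h₁, h₂, h₃⟩ := hcyc
  · exact hs _ _ _ _ h₁ h₂ h₃ hac hbd
  · exact s.trans' hac (s.symm' (hs _ _ _ _ h₁ h₂ h₃ hbd (s.symm' hac)))
  · have hcd : s (c + k) (d + k) := hs _ _ _ _ h₁ h₂ h₃ (s.symm' hac) (s.symm' hbd)
    exact s.trans' hac (s.trans' hcd (s.symm' hbd))
  · exact s.trans' (s.symm' (hs _ _ _ _ h₁ h₂ h₃ (s.symm' hbd) hac)) (s.symm' hbd)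

theorem isNoncrossing_comap_add_iff (k : Fin n) :
    IsNoncrossing (s.comap (· + k)) ↔ IsNoncrossing s := by
  refine ⟨fun h => ?_, fun h => h.comap_add k⟩
  have : NeZero n := NeZero.of_pos k.pos
  have hback : (s.comap (· + k)).comap (· + -k) = s := by ext; simp [Setoid.comap_rel]
  simpa only [hback] using h.comap_add (-k)

end Noncrossing

/-- If `π` is a cyclic shift of an interval partition and `ρ ∈ NC(n)`, then the
join of `π` and `ρ` in the full partition lattice is itself non-crossing, and it
is the join of `π` and `ρ` in `NC(n)`. -/
theorem fullJoin_noncrossing (n : ℕ) (π ρ : NC n)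
    (hπ : IsCyclicIntervalPartition π.1) :
    ∃ h : IsNoncrossing (π.1 ⊔ ρ.1), IsLUB {π, ρ} (⟨π.1 ⊔ ρ.1, h⟩ : NC n) := by
  obtain ⟨k, hk⟩ := hπ
  have : NeZero n := NeZero.of_pos k.pos
  have hNC : IsNoncrossing (π.1 ⊔ ρ.1) := by
    rw [← isNoncrossing_comap_add_iff k,
      Setoid.comap_sup_of_bijective (AddGroup.addRight_bijective k)]
    exact hk.sup_isNoncrossing (ρ.2.comap_add k)
  refine ⟨hNC, ?_, fun σ hσ => ?_⟩
  · rintro σ (rfl | rfl)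
    exacts [Subtype.coe_le_coe.mp le_sup_left, Subtype.coe_le_coe.mp le_sup_right]
  · exact Subtype.coe_le_coe.mp (sup_le (Subtype.coe_le_coe.mpr (hσ (Set.mem_insert _ _)))
      (Subtype.coe_le_coe.mpr (hσ (Set.mem_insert_of_mem _ rfl))))
end

section
/- If π ∈ NC(n) satisfies π ∨̃ ρ = π ∨ ρ for every ρ ∈ NC(n) (i.e., the full-lattice join with every non-crossing partition is non-crossing), then π is a cyclic shift of an interval partition. -/
/-!
Joining `π` with the single pair `{b, d}` merges only the blocks of `b` and `d`. For
`a < b < c < d` with `a ∼ c`, non-crossingness of this join forces `a ∼ b` or `a ∼ d`, and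
likewise `b ∼ d` forces `b ∼ a` or `b ∼ c`: every block of `π` is an arc of the circle
`ℤ/n`. If all consecutive points `i, i + 1` are related, `π` has a single block. Otherwise
cutting the circle between an unrelated pair `i, i + 1` cuts no arc, so after rotating by
`i + 1` every block is an interval.
-/

section Pair
variable {α : Type*} [DecidableEq α]

/-- The partition of `α` whose only non-singleton block is `{u, v}`. -/
def pairSetoid (u v : α) : Setoid α := Setoid.ker fun x => if x = v then u else x

lemma pairSetoid_rel (u v : α) : pairSetoid u v u v :=
  Setoid.ker_def.2 (by simp)

lemma isNoncrossing_pairSetoid {n : ℕ} (u v : Fin n) : IsNoncrossing (pairSetoid u v) := by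
  intro a b c d hab hbc hcd hac hbd
  replace hac := Setoid.ker_def.1 hac
  replace hbd := Setoid.ker_def.1 hbd
  refine Setoid.ker_def.2 ?_
  split_ifs at hac hbd ⊢ <;> subst_vars <;> simp_all [lt_asymm]

lemma rel_or_rel_of_sup_pairSetoid (s : Setoid α) {u v x : α} (h : (s ⊔ pairSetoid u v) u x) :
    s u x ∨ s v x := by
  classical
  let f : α → Quotient s := fun y => if s y v then ⟦u⟧ else ⟦y⟧
  have hf : ∀ w, f w = f (if w = v then u else w) := by
    intro w; split_ifs with hw <;> simp [f, hw]
  have hle : s ⊔ pairSetoid u v ≤ Setoid.ker f := by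
    refine sup_le (fun y z hyz => Setoid.ker_def.2 ?_) (fun y z hyz => Setoid.ker_def.2 ?_)
    · have hv : s y v ↔ s z v := ⟨s.trans (s.symm hyz), s.trans hyz⟩
      simp only [f, hv]
      split_ifs
      · rfl
      · exact Quotient.sound hyz
    · exact (hf y).trans ((congrArg f (Setoid.ker_def.1 hyz)).trans (hf z).symm)
  have hfx : f u = f x := hle h
  by_cases hxv : s x v
  · exact Or.inr (s.symm hxv)
  · simp only [f, hxv, ite_self, if_false] at hfx
    exact Or.inl (Quotient.exact hfx)

end Pair

/-- A partition of a linearly ordered set all of whose blocks are arcs when the order is closed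
up into a circle: a block through two of four cyclically ordered points also contains one of
the two points separating them. -/
def IsCyclicallyConvex {α : Type*} [LinearOrder α] (s : Setoid α) : Prop :=
  ∀ ⦃a b c d : α⦄, a < b → b < c → c < d → (s a c → s a b ∨ s a d) ∧ (s b d → s a b ∨ s b c)

lemma isCyclicallyConvex_of_forall_isNoncrossing_sup {n : ℕ} {s : Setoid (Fin n)}
    (h : ∀ ρ : NC n, IsNoncrossing (s ⊔ ρ.1)) : IsCyclicallyConvex s := by
  intro a b c d hab hbc hcd
  constructor
  · intro hac
    have hj := h ⟨pairSetoid b d, isNoncrossing_pairSetoid b d⟩ a b c d hab hbc hcd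
      (le_sup_left (a := s) hac) (le_sup_right (a := s) (pairSetoid_rel b d))
    exact (rel_or_rel_of_sup_pairSetoid s (Setoid.symm' _ hj)).imp s.symm s.symm
  · intro hbd
    have hj := h ⟨pairSetoid a c, isNoncrossing_pairSetoid a c⟩ a b c d hab hbc hcd
      (le_sup_right (a := s) (pairSetoid_rel a c)) (le_sup_left (a := s) hbd)
    exact (rel_or_rel_of_sup_pairSetoid s hj).imp id s.symm

namespace IsCyclicallyConvex
variable {α : Type*} [LinearOrder α] {s : Setoid α} (hs : IsCyclicallyConvex s)
include hs

/-- A block through `lo ≤ hi` contains all of `[lo, hi]` or all of the complement of `(lo, hi)`. -/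
lemma rel_or_rel {lo b hi w : α} (hlo : lo ≤ b) (hhi : b ≤ hi) (hw : w ≤ lo ∨ hi ≤ w)
    (h : s lo hi) : s lo b ∨ s lo w := by
  rcases hlo.eq_or_lt with rfl | hlo
  · exact Or.inl (s.refl _)
  rcases hhi.eq_or_lt with rfl | hhi
  · exact Or.inl h
  rcases hw with hw | hw
  · rcases hw.eq_or_lt with rfl | hw
    · exact Or.inr (s.refl _)
    exact ((hs hw hlo hhi).2 h).symm.imp_right s.symm
  · rcases hw.eq_or_lt with rfl | hw
    · exact Or.inr h
    exact (hs hlo hhi hw).1 h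

variable {km kk : α} (hk : km ⋖ kk) (hcut : ¬ s km kk)
include hk hcut

lemma rel_of_le_of_le {x y z : α} (hxy : x ≤ y) (hyz : y ≤ z) (hcz : kk ≤ x ∨ z < kk)
    (h : s x z) : s x y := by
  have hkm : km ≤ x ∨ z ≤ km := hcz.imp hk.lt.le.trans hk.le_of_lt
  have hkk : kk ≤ x ∨ z ≤ kk := hcz.imp_right le_of_lt
  rcases hs.rel_or_rel hxy hyz hkm h with hxy' | hxkm
  · exact hxy'
  rcases hs.rel_or_rel hxy hyz hkk h with hxy' | hxkk
  · exact hxy'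
  exact absurd (s.trans (s.symm hxkm) hxkk) hcut

lemma rel_of_lt_of_le {x y z : α} (hzk : z < kk) (hkx : kk ≤ x) (hy : x ≤ y ∨ y ≤ z)
    (h : s x z) : s x y := by
  have hy' : y ≤ z ∨ x ≤ y := hy.symm
  rcases hs.rel_or_rel (hk.le_of_lt hzk) (hk.lt.le.trans hkx) hy' (s.symm h) with hzkm | hzy
  · rcases hs.rel_or_rel hzk.le hkx hy' (s.symm h) with hzkk | hzy
    · exact absurd (s.trans (s.symm hzkm) hzkk) hcut
    · exact s.trans h hzy
  · exact s.trans h hzy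

end IsCyclicallyConvex

section Cut
variable {α : Type*} [LinearOrder α]

/-- The linear order obtained by cutting the circle closed up from `α` just before `kk`:
first `[kk, ∞)`, then `(-∞, kk)`. -/
def cutKey (kk x : α) : Bool ×ₗ α := toLex (decide (x < kk), x)

lemma IsCyclicallyConvex.rel_of_cutKey_le {s : Setoid α} (hs : IsCyclicallyConvex s)
    {km kk x y z : α} (hk : km ⋖ kk) (hcut : ¬ s km kk)
    (hxy : cutKey kk x ≤ cutKey kk y) (hyz : cutKey kk y ≤ cutKey kk z) (h : s x z) : s x y := by
  simp only [cutKey, Prod.Lex.toLex_le_toLex] at hxy hyz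
  by_cases hx : x < kk <;> by_cases hy : y < kk <;> by_cases hz : z < kk <;>
    simp only [hx, hy, hz, decide_true, decide_false, lt_self_iff_false, Bool.false_lt_true,
      (by decide : ¬true < false), Bool.true_eq_false, Bool.false_eq_true, true_and, false_and,
      false_or, or_false, or_self] at hxy hyz
  · exact hs.rel_of_le_of_le hk hcut hxy hyz (Or.inr hz) h
  · exact hs.rel_of_lt_of_le hk hcut hz (not_lt.1 hx) (Or.inr hyz) h
  · exact hs.rel_of_lt_of_le hk hcut hz (not_lt.1 hx) (Or.inl hxy) h
  · exact hs.rel_of_le_of_le hk hcut hxy hyz (Or.inl (not_lt.1 hx)) h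

lemma Fin.add_lt_right_iff_le_val_add {n : ℕ} (a k : Fin n) : a + k < k ↔ n ≤ a.val + k.val := by
  rw [Fin.lt_def, Fin.val_add_eq_ite]
  split_ifs <;> omega

lemma Fin.monotone_cutKey_add {n : ℕ} (k : Fin n) : Monotone fun a => cutKey k (a + k) := by
  intro a b hab
  rw [Fin.le_def] at hab
  simp only [cutKey, Prod.Lex.toLex_le_toLex, Fin.add_lt_right_iff_le_val_add, Fin.le_def,
    Fin.val_add_eq_ite]
  by_cases ha : n ≤ a.val + k.val <;> by_cases hb : n ≤ b.val + k.val <;>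
    simp only [ha, hb, decide_true, decide_false, Bool.false_lt_true, lt_self_iff_false,
      Bool.true_eq_false, Bool.false_eq_true, ↓reduceIte, true_and, false_and, false_or,
      or_false] <;> omega

end Cut

lemma Setoid.rel_of_forall_rel_castSucc_succ {m : ℕ} {s : Setoid (Fin (m + 1))}
    (h : ∀ i : Fin m, s i.castSucc i.succ) (x y : Fin (m + 1)) : s x y :=
  have h0 : ∀ j, s 0 j := Fin.induction (s.refl 0) fun i hi => s.trans hi (h i)
  s.trans (s.symm (h0 x)) (h0 y)

lemma Fin.castSucc_covBy_succ {m : ℕ} (i : Fin m) : i.castSucc ⋖ i.succ :=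
  ⟨Fin.castSucc_lt_succ, fun j h₁ h₂ => by
    simp only [Fin.lt_def, Fin.val_castSucc, Fin.val_succ] at h₁ h₂
    omega⟩

/-- If the full-lattice join of `π` with every non-crossing partition is itself
non-crossing, then `π` is a cyclic shift of an interval partition. -/
theorem cyclicInterval_of_fullJoin (n : ℕ) (hn : 1 ≤ n) (π : NC n)
    (h : ∀ ρ : NC n, IsNoncrossing (π.1 ⊔ ρ.1)) :
    IsCyclicIntervalPartition π.1 := by
  obtain ⟨m, rfl⟩ := Nat.exists_eq_add_of_le' hn
  have hs := isCyclicallyConvex_of_forall_isNoncrossing_sup h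
  by_cases hcons : ∀ i : Fin m, π.1 i.castSucc i.succ
  · exact ⟨0, fun a b _ _ _ _ => Setoid.rel_of_forall_rel_castSucc_succ hcons _ _⟩
  · obtain ⟨i, hcut⟩ := not_forall.1 hcons
    exact ⟨i.succ, fun a b c hab hbc hac => hs.rel_of_cutKey_le (Fin.castSucc_covBy_succ i) hcut
      (Fin.monotone_cutKey_add _ hab) (Fin.monotone_cutKey_add _ hbc) hac⟩
end

section
/- The number of cyclic shifts of interval partitions of {1,...,n} is 2^n − n. -/
/-!
A cyclic shift of an interval partition is determined by its cuts, the points `i` not related to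
`i + 1`: in the shifted coordinates where the blocks are intervals, two points are related exactly
when the run of consecutive points between them contains no cut. No partition has exactly one cut,
and every other set `A` of points is the cut set of the partition into the cyclic arcs that end at
the points of `A`. So these partitions correspond to the `2 ^ n - n` subsets of size other than one.
-/

open Finset Fin.CommRing

namespace Fin

variable {n : ℕ}

theorem orderSucc_eq_add_one {x : Fin (n + 1)} (hx : x ≠ last n) : Order.succ x = x + 1 := by
  obtain ⟨a, rfl⟩ := exists_castSucc_eq.2 hx
  rw [orderSucc_castSucc, coeSucc_eq_succ]

end Fin

variable {n : ℕ}

theorem Setoid.rel_of_forall_rel_add_one (r : Setoid (Fin (n + 1))) {x y : Fin (n + 1)}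
    (hxy : x ≤ y) (h : ∀ z ∈ Set.Ico x y, r z (z + 1)) : r x y := by
  have hsucc : ∀ z ∈ Set.Ico x y, r z (Order.succ z) := fun z hz => by
    rw [Fin.orderSucc_eq_add_one (hz.2.trans_le (Fin.le_last y)).ne]
    exact h z hz
  simpa only [Relation.reflTransGen_eq_self] using reflTransGen_of_succ_of_le r hsucc hxy

theorem IsIntervalPartition.rel_add_one {s : Setoid (Fin (n + 1))} (hs : IsIntervalPartition s)
    {x y z : Fin (n + 1)} (hxy : s x y) (hz : z ∈ Set.Ico x y) : s z (z + 1) := by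
  rw [← Fin.orderSucc_eq_add_one (hz.2.trans_le (Fin.le_last y)).ne]
  have hxz := hs x z y hz.1 hz.2.le hxy
  have hxz' := hs x _ y (hz.1.trans (Order.le_succ z)) (Order.succ_le_of_lt hz.2) hxy
  exact s.trans (s.symm hxz) hxz'

theorem isIntervalPartition_ker_of_monotone {α : Type*} [PartialOrder α] {f : Fin n → α}
    (hf : Monotone f) : IsIntervalPartition (Setoid.ker f) :=
  fun _ _ _ hab hbc hac => le_antisymm (hf hab) (hac ▸ hf hbc)

open Classical in
noncomputable def cuts (s : Setoid (Fin (n + 1))) : Finset (Fin (n + 1)) :=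
  {i | ¬ s i (i + 1)}

theorem mem_cuts {s : Setoid (Fin (n + 1))} {i : Fin (n + 1)} : i ∈ cuts s ↔ ¬ s i (i + 1) := by
  classical simp [cuts]

theorem IsCyclicIntervalPartition.le_of_cuts_subset {s t : Setoid (Fin (n + 1))}
    (hs : IsCyclicIntervalPartition s) (hts : cuts t ⊆ cuts s) : s ≤ t := by
  obtain ⟨k, hk⟩ := hs
  have shifted : ∀ x y, x ≤ y → s (x + k) (y + k) → t (x + k) (y + k) := fun x y hxy hsxy =>
    (t.comap (· + k)).rel_of_forall_rel_add_one hxy fun z hz => by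
      have hsz : s (z + k) (z + k + 1) := add_right_comm z 1 k ▸ hk.rel_add_one hsxy hz
      have htz : t (z + k) (z + k + 1) := not_not.1 fun h => mem_cuts.1 (hts (mem_cuts.2 h)) hsz
      show t (z + k) (z + 1 + k)
      rwa [add_right_comm z 1 k]
  intro i j hij
  rw [← sub_add_cancel i k, ← sub_add_cancel j k] at hij ⊢
  rcases le_total (i - k) (j - k) with hle | hle
  · exact shifted _ _ hle hij
  · exact t.symm (shifted _ _ hle (s.symm hij))

theorem IsCyclicIntervalPartition.eq_of_cuts_eq {s t : Setoid (Fin (n + 1))}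
    (hs : IsCyclicIntervalPartition s) (ht : IsCyclicIntervalPartition t) (h : cuts s = cuts t) :
    s = t :=
  le_antisymm (hs.le_of_cuts_subset h.ge) (ht.le_of_cuts_subset h.le)

theorem card_cuts_ne_one (s : Setoid (Fin (n + 1))) : #(cuts s) ≠ 1 := by
  intro h
  obtain ⟨c, hc⟩ := card_eq_one.1 h
  have hcut : ¬ s c (c + 1) := mem_cuts.1 (hc ▸ mem_singleton_self c)
  -- Walk once around the cycle, from `c + 1` to `c`, without crossing `c`.
  have hwalk : (s.comap (· + (c + 1))) 0 (Fin.last n) :=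
    Setoid.rel_of_forall_rel_add_one _ (Fin.zero_le _) fun z hz => by
      have hzc : z + (c + 1) ∉ cuts s := by
        rw [hc, mem_singleton]
        intro hzc
        have : z = Fin.last n := by linear_combination hzc - Fin.last_add_one n
        exact hz.2.ne this
      show s (z + (c + 1)) (z + 1 + (c + 1))
      rw [add_right_comm z 1]
      exact not_not.1 (mem_cuts.not.1 hzc)
  have hlast : Fin.last n + (c + 1) = c := by linear_combination Fin.last_add_one n
  have hwalk' : s (0 + (c + 1)) (Fin.last n + (c + 1)) := hwalk
  rw [zero_add, hlast] at hwalk'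
  exact hcut (s.symm hwalk')

/-- The number of points of `A` on the cyclic arc from `k` (included) to `i` (excluded). -/
def arcCount (A : Finset (Fin (n + 1))) (k i : Fin (n + 1)) : ℕ :=
  #{c ∈ A | c - k < i - k}

theorem isCyclicIntervalPartition_ker_arcCount (A : Finset (Fin (n + 1))) (k : Fin (n + 1)) :
    IsCyclicIntervalPartition (Setoid.ker (arcCount A k)) := by
  refine ⟨k, isIntervalPartition_ker_of_monotone (f := fun x => arcCount A k (x + k)) ?_⟩
  intro x y hxy
  simp only [arcCount, add_sub_cancel_right]
  exact card_le_card (monotone_filter_right _ fun c _ hc => hc.trans_le hxy)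

theorem arcCount_add_one {A : Finset (Fin (n + 1))} {k i : Fin (n + 1)} (hi : i ≠ k - 1) :
    arcCount A k (i + 1) = arcCount A k i + if i ∈ A then 1 else 0 := by
  have hx : i - k ≠ Fin.last n := fun h => hi (by linear_combination h + Fin.last_add_one n)
  have hsucc : i + 1 - k = Order.succ (i - k) := by
    rw [Fin.orderSucc_eq_add_one hx, sub_add_eq_add_sub]
  have hsplit : {c ∈ A | c - k < i + 1 - k} = {c ∈ A | c - k < i - k} ∪ {c ∈ A | c = i} := by
    ext c
    simp only [mem_filter, mem_union, hsucc, le_iff_lt_or_eq, sub_left_inj,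
      Order.lt_succ_iff_of_not_isMax (not_isMax_iff_ne_top.2 hx)]
    tauto
  rw [arcCount, arcCount, hsplit, card_union_of_disjoint, filter_eq']
  · split_ifs <;> simp
  · exact disjoint_filter.2 fun c _ hlt hci => hlt.ne (hci ▸ rfl)

theorem cuts_ker_arcCount {A : Finset (Fin (n + 1))} {a : Fin (n + 1)} (ha : a ∈ A)
    (hA : #A ≠ 1) : cuts (Setoid.ker (arcCount A (a + 1))) = A := by
  ext i
  rw [mem_cuts, Setoid.ker_def]
  by_cases hia : i = a
  · subst hia
    obtain ⟨c, hc, hci⟩ := exists_mem_ne (by have := card_pos.2 ⟨i, ha⟩; omega : 1 < #A) i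
    have hc_lt : c - (i + 1) < i - (i + 1) := by
      refine lt_of_le_of_ne ?_ fun h => hci (sub_left_injective h)
      simpa only [show i - (i + 1) = Fin.last n by linear_combination -Fin.last_add_one n]
        using Fin.le_last _
    have hpos : arcCount A (i + 1) i ≠ 0 := card_ne_zero.2 ⟨c, mem_filter.2 ⟨hc, hc_lt⟩⟩
    have hzero : arcCount A (i + 1) (i + 1) = 0 := by simp [arcCount]
    simp [hpos, hzero, ha]
  · rw [arcCount_add_one (by simpa using hia)]
    split_ifs <;> simp [*]

theorem exists_isCyclicIntervalPartition_cuts_eq {A : Finset (Fin (n + 1))} (hA : #A ≠ 1) :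
    ∃ s, IsCyclicIntervalPartition s ∧ cuts s = A := by
  rcases A.eq_empty_or_nonempty with rfl | ⟨a, ha⟩
  · refine ⟨⊤, ⟨0, fun _ _ _ _ _ _ => trivial⟩, ?_⟩
    ext i
    simp only [mem_cuts, notMem_empty, iff_false, not_not]
    trivial
  · exact ⟨_, isCyclicIntervalPartition_ker_arcCount A (a + 1), cuts_ker_arcCount ha hA⟩

/-- The number of cyclic shifts of interval partitions of `{1,...,n}` is `2^n - n`. -/
theorem card_cyclicInterval_partitions (n : ℕ) (hn : 1 ≤ n) :
    Nat.card {s : Setoid (Fin n) // IsCyclicIntervalPartition s} = 2 ^ n - n := by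
  obtain ⟨m, rfl⟩ := Nat.exists_eq_add_of_le' hn
  let toCuts : {s : Setoid (Fin (m + 1)) // IsCyclicIntervalPartition s} →
      {A : Finset (Fin (m + 1)) // ¬ #A = 1} := fun s => ⟨cuts s, card_cuts_ne_one s.1⟩
  have hbij : Function.Bijective toCuts := by
    refine ⟨fun s t h => Subtype.ext (s.2.eq_of_cuts_eq t.2 (congrArg Subtype.val h)), fun A => ?_⟩
    obtain ⟨s, hs, hsA⟩ := exists_isCyclicIntervalPartition_cuts_eq A.2
    exact ⟨⟨s, hs⟩, Subtype.ext hsA⟩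
  rw [Nat.card_congr (Equiv.ofBijective toCuts hbij), Nat.card_eq_fintype_card,
    Fintype.card_subtype_compl, Fintype.card_finset_len, Fintype.card_finset, Fintype.card_fin,
    Nat.choose_one_right]
end

section
/- Let F(z,t) be a formal power series in z and t satisfying the functional equation F(z,t) = t·G(z·(1 + F(z,t))) for some formal power series G(z) with G(0)=0. Then the partial derivatives satisfy F_t(z,1) = F(z,1) + z·F_z(z,1) − z·F_z(z,1)/(1 + F(z,1)). -/
/-!
Write `u = z (1 + F)`, so that `F = t G(u)`. Any two derivations `D₁, D₂` satisfy the cross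
relation `D₁(G(u)) D₂ u = D₂(G(u)) D₁ u`: for polynomial `G` both sides are `G'(u) D₁ u D₂ u`,
and a general `G` differs from its truncations by multiples of high powers of `z`, which a
derivation lowers by at most one. For `∂_t` and `∂_z` this gives
`(t F_t - F) (1 + F + z F_z) = z F_z · t F_t`, and setting `t = 1` gives the claim.
-/

/-- The partial derivative `F_t` of a formal power series in `z` whose coefficients
are polynomials in `t` (differentiating coefficientwise in `t`). -/
noncomputable def dT (F : PowerSeries (Polynomial ℚ)) : PowerSeries (Polynomial ℚ) :=
  PowerSeries.mk fun k => Polynomial.derivative (PowerSeries.coeff k F)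

/-- Evaluation of a power series in `z` with polynomial-in-`t` coefficients at `t = 1`. -/
noncomputable def evalT1 (F : PowerSeries (Polynomial ℚ)) : PowerSeries ℚ :=
  PowerSeries.map (Polynomial.evalRingHom 1) F

/-- The derivative `f_z` of a formal power series in `z`. -/
noncomputable def dZ (f : PowerSeries ℚ) : PowerSeries ℚ :=
  PowerSeries.mk fun k => (k + 1 : ℚ) * PowerSeries.coeff (k + 1) f

/-- The composition `G(u) = Σ_m g m · u^m` for `G(z) = Σ_{m ≥ 1} (g m) z^m` a power
series with zero constant term and `u` a power series with zero constant term. -/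
noncomputable def compG (g : ℕ → ℚ) (u : PowerSeries (Polynomial ℚ)) :
    PowerSeries (Polynomial ℚ) :=
  PowerSeries.mk fun k => ∑ m ∈ Finset.range (k + 1),
    Polynomial.C (g m) * PowerSeries.coeff k (u ^ m)

open PowerSeries

namespace Derivation

theorem pow_dvd_apply_of_pow_succ_dvd {S A : Type*} [CommSemiring S] [CommRing A] [Algebra S A]
    (D : Derivation S A A) {a f : A} {n : ℕ} (hf : a ^ (n + 1) ∣ f) : a ^ n ∣ D f := by
  obtain ⟨h, rfl⟩ := hf
  rw [D.leibniz, D.leibniz_pow, Nat.add_sub_cancel, smul_eq_mul, smul_eq_mul, smul_eq_mul,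
    pow_succ]
  exact Dvd.intro (a * D h + h * ((n + 1 : ℕ) • D a)) (by ring)

theorem apply_sum_smul_pow_mul_comm {S₁ S₂ A : Type*} [CommSemiring S₁] [CommSemiring S₂]
    [CommRing A] [Algebra S₁ A] [Algebra S₂ A] [Algebra ℚ A]
    (D₁ : Derivation S₁ A A) (D₂ : Derivation S₂ A A) (c : ℕ → ℚ) (s : Finset ℕ) (a : A) :
    D₁ (∑ m ∈ s, c m • a ^ m) * D₂ a = D₂ (∑ m ∈ s, c m • a ^ m) * D₁ a := by
  simp only [map_sum, map_rat_smul, leibniz_pow, Finset.sum_mul, smul_mul_assoc, smul_eq_mul]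
  refine Finset.sum_congr rfl fun m _ => ?_
  rw [mul_right_comm _ (D₁ a)]

end Derivation

namespace PowerSeries

variable {S R : Type*} [CommSemiring S] [CommSemiring R] [Algebra S R]

noncomputable def mapDerivation (d : Derivation S R R) : Derivation S R⟦X⟧ R⟦X⟧ where
  toFun f := mk fun k => d (coeff k f)
  map_add' f g := by ext; simp
  map_smul' s f := by ext; simp
  map_one_eq_zero' := by ext k; rcases k with _ | k <;> simp [coeff_one]
  leibniz' f g := by
    ext k
    simp only [LinearMap.coe_mk, AddHom.coe_mk, coeff_mk, coeff_mul, map_sum,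
      Derivation.leibniz, smul_eq_mul, map_add, Finset.sum_add_distrib]
    rw [← Finset.Nat.sum_antidiagonal_swap (f := fun p => coeff p.1 g * d (coeff p.2 f))]
    simp only [Prod.fst_swap, Prod.snd_swap]

@[simp]
theorem coeff_mapDerivation (d : Derivation S R R) (f : R⟦X⟧) (k : ℕ) :
    coeff k (mapDerivation d f) = d (coeff k f) :=
  coeff_mk k fun k => d (coeff k f)

@[simp]
theorem mapDerivation_C (d : Derivation S R R) (r : R) : mapDerivation d (C r) = C (d r) := by
  ext k; rcases k with _ | k <;> simp [coeff_C]

@[simp]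
theorem mapDerivation_X (d : Derivation S R R) : mapDerivation d X = 0 := by
  ext k; simp only [coeff_mapDerivation, coeff_X, map_zero]; split_ifs <;> simp

theorem coeff_pow_eq_zero_of_lt {u : R⟦X⟧} (hu : constantCoeff u = 0) {i m : ℕ} (h : i < m) :
    coeff i (u ^ m) = 0 :=
  X_pow_dvd_iff.mp (pow_dvd_pow_of_dvd (X_dvd_iff.mpr hu) m) i h

theorem map_derivative {R' : Type*} [CommSemiring R'] (φ : R →+* R') (f : R⟦X⟧) :
    map φ (d⁄dX R f) = d⁄dX R' (map φ f) := by
  ext k; simp [coeff_derivative]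

end PowerSeries

theorem X_pow_dvd_compG_sub_sum (g : ℕ → ℚ) {u : (Polynomial ℚ)⟦X⟧}
    (hu : constantCoeff u = 0) (N : ℕ) :
    X ^ N ∣ compG g u - ∑ m ∈ Finset.range N, g m • u ^ m := by
  refine X_pow_dvd_iff.mpr fun k hk => ?_
  rw [map_sub, sub_eq_zero, compG, coeff_mk, map_sum]
  refine Finset.sum_subset_zero_on_sdiff (Finset.range_subset_range.mpr hk) ?_ ?_
  · intro m hm
    rw [Finset.mem_sdiff, Finset.mem_range, Finset.mem_range, not_lt] at hm
    rw [coeff_smul, coeff_pow_eq_zero_of_lt hu hm.2, smul_zero]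
  · intro m _
    rw [coeff_smul, Polynomial.smul_eq_C_mul]

theorem compG_apply_mul_comm (g : ℕ → ℚ) {u : (Polynomial ℚ)⟦X⟧} (hu : constantCoeff u = 0)
    {S₁ S₂ : Type*} [CommSemiring S₁] [CommSemiring S₂] [Algebra S₁ (Polynomial ℚ)⟦X⟧]
    [Algebra S₂ (Polynomial ℚ)⟦X⟧] (D₁ : Derivation S₁ (Polynomial ℚ)⟦X⟧ (Polynomial ℚ)⟦X⟧)
    (D₂ : Derivation S₂ (Polynomial ℚ)⟦X⟧ (Polynomial ℚ)⟦X⟧) :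
    D₁ (compG g u) * D₂ u = D₂ (compG g u) * D₁ u := by
  rw [← sub_eq_zero]
  refine ext fun N => X_pow_dvd_iff.mp ?_ N N.lt_succ_self
  set P := ∑ m ∈ Finset.range (N + 2), g m • u ^ m
  have hP : D₁ P * D₂ u = D₂ P * D₁ u := D₁.apply_sum_smul_pow_mul_comm D₂ g _ u
  have hrem : X ^ (N + 1 + 1) ∣ compG g u - P := X_pow_dvd_compG_sub_sum g hu (N + 2)
  have hsplit : D₁ (compG g u) * D₂ u - D₂ (compG g u) * D₁ u =
      D₁ (compG g u - P) * D₂ u - D₂ (compG g u - P) * D₁ u := by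
    simp only [map_sub]
    linear_combination hP
  rw [hsplit]
  exact dvd_sub ((D₁.pow_dvd_apply_of_pow_succ_dvd hrem).mul_right _)
    ((D₂.pow_dvd_apply_of_pow_succ_dvd hrem).mul_right _)

theorem dZ_eq_derivative (f : ℚ⟦X⟧) : dZ f = d⁄dX ℚ f := by
  ext k
  rw [dZ, coeff_mk, coeff_derivative, mul_comm]

-- `algebraPolynomial` makes `ℚ[X]⟦X⟧` a `ℚ[X]`-algebra through `p ↦ p(z)`, not through the
-- coefficients, which is the structure `d⁄dX ℚ[X]` is linear over.
attribute [-instance] PowerSeries.algebraPolynomial in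
theorem functional_equation_pde (F : (Polynomial ℚ)⟦X⟧) (g : ℕ → ℚ)
    (heq : F = C Polynomial.X * compG g (X * (1 + F))) :
    (C Polynomial.X * dT F - F) * (1 + F + X * d⁄dX _ F) =
      X * d⁄dX _ F * (C Polynomial.X * dT F) := by
  set Dt := mapDerivation (Polynomial.derivative' (R := ℚ))
  set Dz := d⁄dX (Polynomial ℚ)
  change (C Polynomial.X * Dt F - F) * (1 + F + X * Dz F) = X * Dz F * (C Polynomial.X * Dt F)
  set T : (Polynomial ℚ)⟦X⟧ := C Polynomial.X
  set u := X * (1 + F)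
  set G := compG g u
  have hu : constantCoeff u = 0 := by simp [u]
  have hFt : Dt F = G + T * Dt G := by
    conv_lhs => rw [heq]
    simp [Dt, T, add_comm]
  have hFz : Dz F = T * Dz G := by
    conv_lhs => rw [heq]
    simp [Dz, T]
  have hut : Dt u = X * Dt F := by simp [Dt, u]
  have huz : Dz u = 1 + F + X * Dz F := by simp [Dz, u]; ring
  have cross := compG_apply_mul_comm g hu Dt Dz
  linear_combination (1 + F + X * Dz F) * T * hFt - (1 + F + X * Dz F) * heq + T ^ 2 * cross
    - T ^ 2 * Dt G * huz + T ^ 2 * Dz G * hut - T * X * Dt F * hFz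

theorem semigroup_derivative_general (F : PowerSeries (Polynomial ℚ)) (g : ℕ → ℚ)
    (heq : F = PowerSeries.C Polynomial.X * compG g (PowerSeries.X * (1 + F))) :
    evalT1 (dT F) * (1 + evalT1 F) =
      (evalT1 F + PowerSeries.X * dZ (evalT1 F)) * (1 + evalT1 F)
        - PowerSeries.X * dZ (evalT1 F) := by
  have h := congrArg evalT1 (functional_equation_pde F g heq)
  rw [dZ_eq_derivative]
  simp only [evalT1, map_mul, map_sub, map_add, map_one, map_X, map_C, map_derivative,
    Polynomial.coe_evalRingHom, Polynomial.eval_X, one_mul] at h ⊢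
  linear_combination h

/-- If `F(z,t)` (with zero constant term in `z`) satisfies the functional equation
`F(z,t) = t · G(z (1 + F(z,t)))` for a power series `G` with `G(0) = 0`, then
`F_t(z,1) = F(z,1) + z F_z(z,1) - z F_z(z,1) / (1 + F(z,1))`
(stated after multiplying through by the unit `1 + F(z,1)`). -/
theorem semigroup_derivative (F : PowerSeries (Polynomial ℚ)) (g : ℕ → ℚ)
    (hF0 : PowerSeries.constantCoeff F = 0) (hg0 : g 0 = 0)
    (heq : F = PowerSeries.C Polynomial.X * compG g (PowerSeries.X * (1 + F))) :
    evalT1 (dT F) * (1 + evalT1 F) =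
      (evalT1 F + PowerSeries.X * dZ (evalT1 F)) * (1 + evalT1 F)
        - PowerSeries.X * dZ (evalT1 F) :=
  semigroup_derivative_general F g heq
end

section
/- For n ≥ m ≥ 1 and a sequence j = (j_1, j_2, ...) of nonnegative integers with Σ j_k = m and Σ k·j_k = n, the quantity Σ over sequences i = (i_1, i_2, ...) with Σ i_ℓ = n−m+1 and Σ ℓ·i_ℓ = n of m!(n−m)! · Π_ℓ (1/i_ℓ!) · Π_k (k^{j_k}/j_k!) equals (m(n−1)!/(n−m+1)!) · Π_k (k^{j_k}/j_k!). Equivalently, Σ over such i of Π_ℓ (1/i_ℓ!) = (1/(n−m+1)!)·binomial(n−1, m−1). -/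
/-!
For the multiplicity vector `i` of a partition of `n` into `q = n - m + 1` parts,
`q! · ∏ 1 / i_ℓ!` is the multinomial coefficient counting the compositions of `n` whose
multiset of parts is that partition. Summing over `i` therefore counts all compositions of `n`
into `q` positive parts, i.e. the coefficient of `x^n` in `(x + x² + ⋯)^q = (x / (1 - x))^q`,
which is `C(n - 1, q - 1) = C(n - 1, m - 1)`. The factor `∏_k k^{j_k} / j_k!` is constant in `i`,
and `m! (n - m)! C(n - 1, m - 1) = m (n - 1)!` gives the first identity.
-/

open Finset PowerSeries

namespace PowerSeries

section CommSemiring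

variable {R : Type*} [CommSemiring R]

theorem coeff_pow_eq_of_coeff_eq {f g : R⟦X⟧} {n : ℕ} (h : ∀ a ≤ n, coeff a f = coeff a g)
    (q : ℕ) : coeff n (f ^ q) = coeff n (g ^ q) := by
  have htrunc : trunc (n + 1) f = trunc (n + 1) g := Polynomial.ext fun a => by
    simp only [coeff_trunc]
    split_ifs with ha
    exacts [h a (by omega), rfl]
  calc coeff n (f ^ q) = (trunc (n + 1) (f ^ q)).coeff n := by simp [coeff_trunc]
    _ = (trunc (n + 1) (g ^ q)).coeff n := by rw [← trunc_trunc_pow, htrunc, trunc_trunc_pow]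
    _ = coeff n (g ^ q) := by simp [coeff_trunc]

theorem coeff_sum_X_pow_pow (s : Finset ℕ) (q n : ℕ) :
    coeff n ((∑ l ∈ s, X ^ l : R⟦X⟧) ^ q) =
      ∑ k ∈ (piAntidiag s q).filter (fun k => ∑ l ∈ s, l * k l = n),
        (Nat.multinomial s k : R) := by
  rw [sum_pow_eq_sum_piAntidiag, map_sum, sum_filter]
  refine sum_congr rfl fun k _ => ?_
  simp_rw [← pow_mul, prod_pow_eq_pow_sum, ← map_natCast (C (R := R)), coeff_C_mul, coeff_X_pow]
  split_ifs <;> simp_all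

theorem coeff_sum_Icc_X_pow {n a : ℕ} (ha : a ≤ n) :
    coeff a (∑ l ∈ Icc 1 n, X ^ l : R⟦X⟧) = coeff a (X * mk 1) := by
  rcases a with _ | a
  · simp
  · simp [coeff_X_pow, coeff_succ_X_mul, ha]

end CommSemiring

theorem coeff_X_mul_mk_one_pow {R : Type*} [CommRing R] {n q : ℕ} (hq : 0 < q) (hqn : q ≤ n) :
    coeff n ((X * mk 1 : R⟦X⟧) ^ q) = (n - 1).choose (q - 1) := by
  obtain ⟨d, rfl⟩ : ∃ d, q = d + 1 := ⟨q - 1, by omega⟩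
  rw [mul_pow, mk_one_pow_eq_mk_choose_add, coeff_X_pow_mul', if_pos hqn, coeff_mk]
  congr 2
  omega

end PowerSeries

theorem sum_multinomial_piAntidiag_Icc {n q : ℕ} (hq : 0 < q) (hqn : q ≤ n) :
    ∑ k ∈ (piAntidiag (Icc 1 n) q).filter (fun k => ∑ l ∈ Icc 1 n, l * k l = n),
      Nat.multinomial (Icc 1 n) k = (n - 1).choose (q - 1) := by
  -- Computed in `ℤ⟦X⟧`, where `(1 - X)⁻¹ = mk 1` is available.
  apply Nat.cast_injective (R := ℤ)
  rw [Nat.cast_sum, ← coeff_sum_X_pow_pow,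
    coeff_pow_eq_of_coeff_eq (fun _ => coeff_sum_Icc_X_pow), coeff_X_mul_mk_one_pow hq hqn]

theorem Finset.sum_finsuppAntidiag_eq_sum_piAntidiag {ι μ M : Type*} [DecidableEq ι]
    [AddCommMonoid μ] [HasAntidiagonal μ] [DecidableEq μ] [AddCommMonoid M]
    (s : Finset ι) (q : μ) (g : (ι → μ) → M) :
    ∑ i ∈ finsuppAntidiag s q, g i = ∑ k ∈ piAntidiag s q, g k := by
  rw [finsuppAntidiag, sum_map, ← sum_attach (piAntidiag s q)]
  rfl

theorem Finsupp.prod_one_div_factorial_eq {α K : Type*} [Field K] [CharZero K]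
    (i : α →₀ ℕ) :
    ∏ l ∈ i.support, 1 / ((i l).factorial : K) =
      i.multinomial / (∑ l ∈ i.support, i l).factorial := by
  rw [eq_div_iff (Nat.cast_ne_zero.2 (Nat.factorial_ne_zero _)), Finsupp.multinomial_eq,
    ← Nat.multinomial_spec, Nat.cast_mul, Nat.cast_prod, ← mul_assoc, ← prod_mul_distrib]
  simp [Nat.factorial_ne_zero]

def partitionMultiplicities (n q : ℕ) : Finset (ℕ →₀ ℕ) :=
  (finsuppAntidiag (Icc 1 n) q).filter (fun i => ∑ l ∈ Icc 1 n, l * i l = n)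

theorem support_subset_Icc_of_sum_mul_eq {n : ℕ} {i : ℕ →₀ ℕ} (h0 : i 0 = 0)
    (hn : ∑ l ∈ i.support, l * i l = n) : i.support ⊆ Icc 1 n := by
  intro l hl
  have hil : i l ≠ 0 := Finsupp.mem_support_iff.1 hl
  have hl0 : l ≠ 0 := by rintro rfl; exact hil h0
  have hterm : l * i l ≤ n := hn ▸ single_le_sum (f := fun l => l * i l) (by simp) hl
  have hl_le : l ≤ l * i l := Nat.le_mul_of_pos_right l (Nat.pos_of_ne_zero hil)
  simp only [mem_Icc]
  omega

theorem mem_partitionMultiplicities {n q : ℕ} {i : ℕ →₀ ℕ} :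
    i ∈ partitionMultiplicities n q ↔
      i 0 = 0 ∧ ∑ l ∈ i.support, i l = q ∧ ∑ l ∈ i.support, l * i l = n := by
  have sum_support_eq (f : ℕ → ℕ → ℕ) (hf : ∀ l, f l 0 = 0)
      (hs : i.support ⊆ Icc 1 n) :
      ∑ l ∈ i.support, f l (i l) = ∑ l ∈ Icc 1 n, f l (i l) :=
    sum_subset hs fun l _ hl => by rw [Finsupp.notMem_support_iff.1 hl, hf]
  rw [partitionMultiplicities, mem_filter, mem_finsuppAntidiag]
  constructor
  · rintro ⟨⟨hq, hs⟩, hn⟩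
    refine ⟨Finsupp.notMem_support_iff.1 fun h => by simpa using hs h, ?_, ?_⟩
    · rwa [sum_support_eq (fun _ k => k) (fun _ => rfl) hs]
    · rwa [sum_support_eq (fun l k => l * k) (fun _ => rfl) hs]
  · rintro ⟨h0, hq, hn⟩
    have hs := support_subset_Icc_of_sum_mul_eq h0 hn
    rw [sum_support_eq (fun _ k => k) (fun _ => rfl) hs] at hq
    rw [sum_support_eq (fun l k => l * k) (fun _ => rfl) hs] at hn
    exact ⟨⟨hq, hs⟩, hn⟩

theorem finsum_eq_sum_partitionMultiplicities {M : Type*} [AddCommMonoid M] (n q : ℕ)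
    (g : (ℕ →₀ ℕ) → M) :
    ∑ᶠ i : {i : ℕ →₀ ℕ // i 0 = 0 ∧
        (∑ l ∈ i.support, i l) = q ∧ (∑ l ∈ i.support, l * i l) = n}, g i =
      ∑ i ∈ partitionMultiplicities n q, g i := by
  simp_rw [finsum_subtype_eq_finsum_cond, ← mem_partitionMultiplicities, finsum_mem_finset_eq_sum]

theorem sum_multinomial_partitionMultiplicities {n q : ℕ} (hq : 0 < q) (hqn : q ≤ n) :
    ∑ i ∈ partitionMultiplicities n q, i.multinomial = (n - 1).choose (q - 1) := by
  rw [← sum_multinomial_piAntidiag_Icc hq hqn, partitionMultiplicities, sum_filter, sum_filter,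
    ← sum_finsuppAntidiag_eq_sum_piAntidiag]
  refine sum_congr rfl fun i hi => ?_
  rw [Finsupp.multinomial_eq_of_support_subset (mem_finsuppAntidiag.1 hi).2]

theorem sum_prod_one_div_factorial_partitionMultiplicities {K : Type*} [Field K] [CharZero K]
    {n q : ℕ} (hq : 0 < q) (hqn : q ≤ n) :
    ∑ i ∈ partitionMultiplicities n q, ∏ l ∈ i.support, 1 / ((i l).factorial : K) =
      (n - 1).choose (q - 1) / q.factorial := by
  rw [← sum_multinomial_partitionMultiplicities hq hqn, Nat.cast_sum, sum_div]
  refine sum_congr rfl fun i hi => ?_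
  rw [Finsupp.prod_one_div_factorial_eq, (mem_partitionMultiplicities.1 hi).2.1]

theorem Nat.factorial_mul_factorial_mul_choose_pred {n m : ℕ} (hm : 1 ≤ m) (hmn : m ≤ n) :
    m.factorial * (n - m).factorial * (n - 1).choose (m - 1) = m * (n - 1).factorial := by
  rw [← Nat.mul_factorial_pred (by omega : m ≠ 0), ← Nat.choose_mul_factorial_mul_factorial
    (by omega : m - 1 ≤ n - 1), show n - 1 - (m - 1) = n - m by omega]
  ring

open Finsupp in
theorem meandric_count_sum_i_general (n m : ℕ) (hm : 1 ≤ m) (hmn : m ≤ n) (j : ℕ →₀ ℕ) :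
    (∑ᶠ i : {i : ℕ →₀ ℕ // i 0 = 0 ∧
        (∑ l ∈ i.support, i l) = n - m + 1 ∧ (∑ l ∈ i.support, l * i l) = n},
      ((m.factorial * (n - m).factorial : ℚ) *
        (∏ l ∈ i.1.support, 1 / ((i.1 l).factorial : ℚ)) *
        ∏ k ∈ j.support, (k : ℚ) ^ (j k) / ((j k).factorial : ℚ)))
      = ((m : ℚ) * (n - 1).factorial / ((n - m + 1).factorial : ℚ)) *
        ∏ k ∈ j.support, (k : ℚ) ^ (j k) / ((j k).factorial : ℚ) ∧
    (∑ᶠ i : {i : ℕ →₀ ℕ // i 0 = 0 ∧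
        (∑ l ∈ i.support, i l) = n - m + 1 ∧ (∑ l ∈ i.support, l * i l) = n},
      ∏ l ∈ i.1.support, 1 / ((i.1 l).factorial : ℚ))
      = (Nat.choose (n - 1) (m - 1) : ℚ) / ((n - m + 1).factorial : ℚ) := by
  have hsum : ∑ i ∈ partitionMultiplicities n (n - m + 1),
      ∏ l ∈ i.support, 1 / ((i l).factorial : ℚ) =
        (n - 1).choose (m - 1) / (n - m + 1).factorial := by
    rw [sum_prod_one_div_factorial_partitionMultiplicities (by omega) (by omega),
      Nat.choose_symm_of_eq_add (by omega : n - 1 = (n - m + 1 - 1) + (m - 1))]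
  refine ⟨?_, ?_⟩
  -- The summands are given explicitly: `rw` cannot solve `?g ↑i =?= …` for `?g`.
  · rw [finsum_eq_sum_partitionMultiplicities n _ fun i =>
        (m.factorial * (n - m).factorial : ℚ) *
          (∏ l ∈ i.support, 1 / ((i l).factorial : ℚ)) *
          ∏ k ∈ j.support, (k : ℚ) ^ (j k) / ((j k).factorial : ℚ),
      ← Finset.sum_mul, ← Finset.mul_sum, hsum, mul_div_assoc']
    congr 2
    exact_mod_cast Nat.factorial_mul_factorial_mul_choose_pred hm hmn
  · rw [← hsum, finsum_eq_sum_partitionMultiplicities n _ fun i =>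
      ∏ l ∈ i.support, 1 / ((i l).factorial : ℚ)]

open Finsupp in
/-- For `n ≥ m ≥ 1` and a finitely supported sequence `j = (j_1, j_2, ...)` (we use
`j : ℕ →₀ ℕ` with `j 0 = 0`, so only indices `k ≥ 1` matter) with `Σ j_k = m` and
`Σ k·j_k = n`, summing `m!(n−m)!·Π_ℓ 1/i_ℓ!·Π_k k^{j_k}/j_k!` over all finitely
supported `i` with `i 0 = 0`, `Σ i_ℓ = n−m+1`, `Σ ℓ·i_ℓ = n` gives
`(m(n−1)!/(n−m+1)!)·Π_k k^{j_k}/j_k!`; equivalently, the sum of `Π_ℓ 1/i_ℓ!` over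
such `i` equals `binomial(n−1, m−1)/(n−m+1)!`. -/
theorem meandric_count_sum_i (n m : ℕ) (hm : 1 ≤ m) (hmn : m ≤ n)
    (j : ℕ →₀ ℕ) (hj0 : j 0 = 0)
    (hjm : ∑ k ∈ j.support, j k = m) (hjn : ∑ k ∈ j.support, k * j k = n) :
    (∑ᶠ i : {i : ℕ →₀ ℕ // i 0 = 0 ∧
        (∑ l ∈ i.support, i l) = n - m + 1 ∧ (∑ l ∈ i.support, l * i l) = n},
      ((m.factorial * (n - m).factorial : ℚ) *
        (∏ l ∈ i.1.support, 1 / ((i.1 l).factorial : ℚ)) *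
        ∏ k ∈ j.support, (k : ℚ) ^ (j k) / ((j k).factorial : ℚ)))
      = ((m : ℚ) * (n - 1).factorial / ((n - m + 1).factorial : ℚ)) *
        ∏ k ∈ j.support, (k : ℚ) ^ (j k) / ((j k).factorial : ℚ) ∧
    (∑ᶠ i : {i : ℕ →₀ ℕ // i 0 = 0 ∧
        (∑ l ∈ i.support, i l) = n - m + 1 ∧ (∑ l ∈ i.support, l * i l) = n},
      ∏ l ∈ i.1.support, 1 / ((i.1 l).factorial : ℚ))
      = (Nat.choose (n - 1) (m - 1) : ℚ) / ((n - m + 1).factorial : ℚ) :=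
  meandric_count_sum_i_general n m hm hmn j
end

section
/- For n ≥ m ≥ 1, the sum over finitely supported sequences (j_1, j_2, ...) of nonnegative integers with Σ_k j_k = m and Σ_k k·j_k = n of Π_k (k^{j_k}/j_k!) equals (1/m!)·binomial(n+m−1, n−m); consequently Σ_j (m(n−1)!/(n−m+1)!)·Π_k (k^{j_k}/j_k!) = (1/n)·binomial(n, m−1)·binomial(n+m−1, n−m). -/
/-!
By the multinomial theorem, `m!` times the sum is the coefficient of `x^n` in
`(∑_{k=1}^n k x^k)^m`; up to degree `n` the inner sum agrees with `x/(1-x)^2`, and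
`[x^n] (x/(1-x)^2)^m = [x^(n-m)] (1-x)^(-2m) = binomial(n+m-1, n-m)`.
The second identity is the first multiplied by `m(n-1)!/(n-m+1)! = m! · binomial(n, m-1)/n`.
-/

open Finset PowerSeries Nat

theorem Finset.sum_pow_eq_sum_finsuppAntidiag {α R : Type*} [DecidableEq α] [CommSemiring R]
    (s : Finset α) (f : α → R) (m : ℕ) :
    (∑ i ∈ s, f i) ^ m =
      ∑ k ∈ s.finsuppAntidiag m, (Nat.multinomial s k : R) * ∏ i ∈ s, f i ^ k i := by
  rw [sum_pow_eq_sum_piAntidiag, finsuppAntidiag, sum_map, ← sum_attach]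
  rfl

theorem PowerSeries.coeff_sum_monomial_pow {R : Type*} [CommSemiring R]
    (s : Finset ℕ) (a : ℕ → R) (m n : ℕ) :
    coeff n ((∑ i ∈ s, monomial i (a i)) ^ m) =
      ∑ k ∈ s.finsuppAntidiag m with ∑ i ∈ s, i * k i = n,
        (Nat.multinomial s k : R) * ∏ i ∈ s, a i ^ k i := by
  simp only [sum_pow_eq_sum_finsuppAntidiag, monomial_pow, prod_monomial, map_sum, sum_filter,
    ← map_natCast (C (R := R)), ← smul_eq_C_mul, LinearMap.map_smul_of_tower, coeff_monomial]
  refine sum_congr rfl fun k _ => ?_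
  simp only [smul_eq_mul, mul_ite, mul_zero, mul_comm (k _), eq_comm]

theorem PowerSeries.coeff_pow_eq_of_coeff_eq_s19 {R : Type*} [CommRing R] {f g : R⟦X⟧} {n : ℕ}
    (h : ∀ i ≤ n, coeff i f = coeff i g) (m : ℕ) : coeff n (f ^ m) = coeff n (g ^ m) := by
  have hfg : X ^ (n + 1) ∣ f - g := X_pow_dvd_iff.2 fun i hi => by
    rw [map_sub, h i (by omega), sub_self]
  rw [← sub_eq_zero, ← map_sub]
  exact X_pow_dvd_iff.1 (hfg.trans (sub_dvd_pow_sub_pow f g m)) n (by omega)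

theorem PowerSeries.mk_natCast_eq_X_mul_invOneSubPow_two (R : Type*) [CommRing R] :
    (mk fun k => (k : R)) = X * (invOneSubPow R 2).val := by
  ext (_ | k)
  · simp
  · rw [coeff_mk, coeff_succ_X_mul, invOneSubPow_val_succ_eq_mk_add_choose, coeff_mk,
      Nat.choose_one_right]
    push_cast
    ring

theorem PowerSeries.coeff_mk_natCast_pow {R : Type*} [CommRing R] {m n : ℕ} (hm : 1 ≤ m)
    (hmn : m ≤ n) : coeff n ((mk fun k => (k : R)) ^ m) = (n + m - 1).choose (n - m) := by
  have hpow : (invOneSubPow R 2).val ^ m = (invOneSubPow R (2 * m - 1 + 1)).val := by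
    rw [Nat.sub_add_cancel (by omega), ← Units.val_pow_eq_pow_val,
      invOneSubPow_eq_inv_one_sub_pow, invOneSubPow_eq_inv_one_sub_pow, ← pow_mul]
  rw [mk_natCast_eq_X_mul_invOneSubPow_two, mul_pow, hpow, coeff_X_pow_mul', if_pos hmn,
    invOneSubPow_val_succ_eq_mk_add_choose, coeff_mk, Nat.choose_symm_add]
  congr 2
  omega

theorem Nat.cast_multinomial {α K : Type*} [Field K] [CharZero K] (s : Finset α) (f : α → ℕ) :
    (Nat.multinomial s f : K) = (∑ i ∈ s, f i)! / ∏ i ∈ s, ((f i)! : K) := by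
  rw [eq_div_iff (prod_ne_zero_iff.2 fun i _ => by exact_mod_cast (f i).factorial_ne_zero),
    mul_comm]
  exact_mod_cast Nat.multinomial_spec s f

theorem Nat.cast_choose_sub_one_div_self {K : Type*} [Field K] [CharZero K] {m n : ℕ}
    (hm : 1 ≤ m) (hmn : m ≤ n) :
    (n.choose (m - 1) : K) / n = m * (n - 1)! / ((n - m + 1)! * m !) := by
  rw [Nat.cast_choose K (by omega : m - 1 ≤ n), show n - (m - 1) = n - m + 1 by omega,
    ← Nat.mul_factorial_pred (by omega : n ≠ 0), ← Nat.mul_factorial_pred (by omega : m ≠ 0)]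
  have hn0 : (n : K) ≠ 0 := by norm_cast; omega
  have hm0 : (m : K) ≠ 0 := by norm_cast; omega
  push_cast
  field_simp

theorem Finsupp.support_subset_Icc_of_sum_mul {j : ℕ →₀ ℕ} {n : ℕ} (h0 : j 0 = 0)
    (hn : ∑ k ∈ j.support, k * j k = n) : j.support ⊆ Icc 1 n := by
  intro k hk
  have hjk : j k ≠ 0 := Finsupp.mem_support_iff.1 hk
  have hk0 : k ≠ 0 := by rintro rfl; exact hjk h0
  have : k * j k ≤ n := hn ▸ Finset.single_le_sum (f := fun k => k * j k) (by simp) hk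
  have : k ≤ k * j k := Nat.le_mul_of_pos_right k (Nat.pos_of_ne_zero hjk)
  simp only [mem_Icc]
  omega

theorem setOf_eq_coe_filter_finsuppAntidiag_Icc (m n : ℕ) :
    {j : ℕ →₀ ℕ | j 0 = 0 ∧ ∑ k ∈ j.support, j k = m ∧ ∑ k ∈ j.support, k * j k = n} =
      ↑({j ∈ (Icc 1 n).finsuppAntidiag m | ∑ k ∈ Icc 1 n, k * j k = n}) := by
  ext j
  simp only [Set.mem_ofPred_eq, coe_filter, mem_finsuppAntidiag]
  constructor
  · rintro ⟨h0, hm, hn⟩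
    have hs := Finsupp.support_subset_Icc_of_sum_mul h0 hn
    rw [← sum_subset hs (by simp +contextual), ← sum_subset hs (by simp +contextual)]
    exact ⟨⟨hm, hs⟩, hn⟩
  · rintro ⟨⟨hm, hs⟩, hn⟩
    have h0 : j 0 = 0 := Finsupp.notMem_support_iff.1 fun h => by simpa using hs h
    rw [sum_subset hs (by simp +contextual), sum_subset hs (by simp +contextual)]
    exact ⟨h0, hm, hn⟩

theorem finsum_subtype_eq_sum_of_setOf_eq {α M : Type*} [AddCommMonoid M] {p : α → Prop}
    {s : Finset α} (h : {x | p x} = ↑s) (f : α → M) :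
    ∑ᶠ x : {x // p x}, f x = ∑ x ∈ s, f x := by
  rw [finsum_subtype_eq_finsum_cond, ← finsum_mem_coe_finset, ← h]
  rfl

theorem sum_filter_finsuppAntidiag_prod_pow_div_factorial {m n : ℕ} (hm : 1 ≤ m)
    (hmn : m ≤ n) :
    ∑ j ∈ (Icc 1 n).finsuppAntidiag m with ∑ k ∈ Icc 1 n, k * j k = n,
        ∏ k ∈ Icc 1 n, (k : ℚ) ^ j k / (j k)! =
      1 / m ! * (n + m - 1).choose (n - m) := by
  have hcoeff : ∀ i ≤ n,
      coeff i (∑ k ∈ Icc 1 n, monomial k (k : ℚ)) = coeff i (mk fun k => (k : ℚ)) := by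
    intro i hi
    simp +contextual [coeff_monomial, hi]
  rw [← coeff_mk_natCast_pow hm hmn, ← coeff_pow_eq_of_coeff_eq_s19 hcoeff, coeff_sum_monomial_pow,
    mul_sum]
  refine sum_congr rfl fun j hj => ?_
  have hjm : ∑ k ∈ Icc 1 n, j k = m := (mem_finsuppAntidiag.1 (mem_filter.1 hj).1).1
  rw [cast_multinomial, hjm, prod_div_distrib]
  field_simp

open Finsupp in
/-- For `n ≥ m ≥ 1`, the sum over finitely supported sequences `j = (j_1, j_2, ...)`
(modeled as `j : ℕ →₀ ℕ` with `j 0 = 0`) with `Σ j_k = m` and `Σ k·j_k = n` of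
`Π_k k^{j_k}/j_k!` equals `(1/m!)·binomial(n+m−1, n−m)`; consequently the sum of
`(m(n−1)!/(n−m+1)!)·Π_k k^{j_k}/j_k!` over such `j` equals
`(1/n)·binomial(n, m−1)·binomial(n+m−1, n−m)`. -/
theorem meandric_count_sum_j (n m : ℕ) (hm : 1 ≤ m) (hmn : m ≤ n) :
    (∑ᶠ j : {j : ℕ →₀ ℕ // j 0 = 0 ∧
        (∑ k ∈ j.support, j k) = m ∧ (∑ k ∈ j.support, k * j k) = n},
      ∏ k ∈ j.1.support, (k : ℚ) ^ (j.1 k) / ((j.1 k).factorial : ℚ))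
      = (1 / (m.factorial : ℚ)) * (Nat.choose (n + m - 1) (n - m) : ℚ) ∧
    (∑ᶠ j : {j : ℕ →₀ ℕ // j 0 = 0 ∧
        (∑ k ∈ j.support, j k) = m ∧ (∑ k ∈ j.support, k * j k) = n},
      ((m : ℚ) * ((n - 1).factorial : ℚ) / (((n - m + 1).factorial : ℚ))) *
        ∏ k ∈ j.1.support, (k : ℚ) ^ (j.1 k) / ((j.1 k).factorial : ℚ))
      = (1 / (n : ℚ)) * (Nat.choose n (m - 1) : ℚ) *
          (Nat.choose (n + m - 1) (n - m) : ℚ) := by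
  have hF : ∀ c : ℚ, ∑ᶠ j : {j : ℕ →₀ ℕ // j 0 = 0 ∧
        (∑ k ∈ j.support, j k) = m ∧ (∑ k ∈ j.support, k * j k) = n},
        c * ∏ k ∈ j.1.support, (k : ℚ) ^ (j.1 k) / (j.1 k)! =
      c * (1 / m ! * (n + m - 1).choose (n - m)) := by
    intro c
    rw [finsum_subtype_eq_sum_of_setOf_eq (setOf_eq_coe_filter_finsuppAntidiag_Icc m n)
        (fun j => c * ∏ k ∈ j.support, (k : ℚ) ^ j k / (j k)!),
      ← sum_filter_finsuppAntidiag_prod_pow_div_factorial hm hmn, Finset.mul_sum]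
    refine sum_congr rfl fun j hj => congrArg (c * ·) (prod_subset ?_ fun k _ hk => ?_)
    · exact (mem_finsuppAntidiag.1 (mem_filter.1 hj).1).2
    · simp [Finsupp.notMem_support_iff.1 hk]
  refine ⟨by simpa using hF 1, ?_⟩
  rw [hF, ← mul_assoc, mul_one_div, div_div, ← cast_choose_sub_one_div_self hm hmn]
  ring
end
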